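/- Let α₁, α₂, β₁, β₂ ∈ ℂ and set ã₁ = (−α₁, 1)ᵀ, ã₂ = (α₂, −1)ᵀ, b̃₁ = (−β₁, 1)ᵀ, b̃₂ = (β₂, −1)ᵀ. Then (𝒮 ∘ M)(θ(ã₁ b̃₂ᵀ, ã₂ b̃₁ᵀ)) = (α₁α₂, −(α₁+α₂), 1)ᵀ · (β₁β₂, −(β₁+β₂), 1); in particular it coincides with (𝒮 ∘ M)(θ(ã₁ b̃₁ᵀ, ã₂ b̃₂ᵀ)). -/
import Mathlib

open Matrix

noncomputable def thetaMap (U V : Matrix (Fin 2) (Fin 2) ℂ) : Fin 10 → ℂ :=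
  ![U 0 0 * V 0 0, U 1 0 * V 1 0, U 0 1 * V 0 1, U 1 1 * V 1 1,
    U 0 0 * V 1 0 + U 1 0 * V 0 0, U 0 0 * V 0 1 + U 0 1 * V 0 0,
    U 0 0 * V 1 1 + U 1 1 * V 0 0, U 1 0 * V 0 1 + U 0 1 * V 1 0,
    U 1 0 * V 1 1 + U 1 1 * V 1 0, U 0 1 * V 1 1 + U 1 1 * V 0 1]

noncomputable def SM (ϑ : Fin 10 → ℂ) : Matrix (Fin 3) (Fin 3) ℂ :=
  !![ϑ 0, ϑ 5,       ϑ 2;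
     ϑ 4, ϑ 6 + ϑ 7, ϑ 9;
     ϑ 1, ϑ 8,       ϑ 3]

lemma SM_thetaMap (U V : Matrix (Fin 2) (Fin 2) ℂ) :
    SM (thetaMap U V) =
    !![U 0 0 * V 0 0, U 0 0 * V 0 1 + U 0 1 * V 0 0, U 0 1 * V 0 1;
       U 0 0 * V 1 0 + U 1 0 * V 0 0,
         (U 0 0 * V 1 1 + U 1 1 * V 0 0) + (U 1 0 * V 0 1 + U 0 1 * V 1 0),
         U 0 1 * V 1 1 + U 1 1 * V 0 1;
       U 1 0 * V 1 0, U 1 0 * V 1 1 + U 1 1 * V 1 0, U 1 1 * V 1 1] := rfl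

/-- With `a1 = (−α₁,1)ᵀ`, `a2 = (α₂,−1)ᵀ`, `b1 = (−β₁,1)ᵀ`, `b2 = (β₂,−1)ᵀ`,
one has `(𝒮 ∘ M)(θ(a1 b2ᵀ, a2 b1ᵀ)) = (α₁α₂, −(α₁+α₂), 1)ᵀ (β₁β₂, −(β₁+β₂), 1)`;
in particular it coincides with `(𝒮 ∘ M)(θ(a1 b1ᵀ, a2 b2ᵀ))`. -/
theorem SM_theta_swapped_rank_one
    (α₁ α₂ β₁ β₂ : ℂ)
    (a1 a2 b1 b2 : Fin 2 → ℂ)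
    (ha1 : a1 = ![-α₁, 1]) (ha2 : a2 = ![α₂, -1])
    (hb1 : b1 = ![-β₁, 1]) (hb2 : b2 = ![β₂, -1]) :
    SM (thetaMap (vecMulVec a1 b2) (vecMulVec a2 b1))
        = vecMulVec ![α₁ * α₂, -(α₁ + α₂), 1] ![β₁ * β₂, -(β₁ + β₂), 1] ∧
      SM (thetaMap (vecMulVec a1 b2) (vecMulVec a2 b1))
        = SM (thetaMap (vecMulVec a1 b1) (vecMulVec a2 b2)) := by
  subst ha1 ha2 hb1 hb2
  constructor <;>
  · ext i j
    fin_cases i <;> fin_cases j <;>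
      · simp [SM_thetaMap, vecMulVec_apply]
        try ring
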